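/- For the 1-dimensional gadget construction: the sequence M(S*) obtained from a string S* ∈ {A,B}^t by mapping each character to a pair of points (0 then −2 for A; 0 then 2 for B) and appending a final 0, has discrete Fréchet distance at most 1 to the sequence A^a = ⟨1, (−3, 1)^a⟩ whenever S* contains exactly a occurrences of A, and discrete Fréchet distance at most 1 to B^b = ⟨−1, (3, −1)^b⟩ whenever S* contains exactly b occurrences of B. -/

import Mathlib

open Set

/-- One step of a traversal: increment one or both indices by 1. -/
def FrStep (p q : ℕ × ℕ) : Prop :=
  (q.1 = p.1 + 1 ∧ q.2 = p.2) ∨ (q.1 = p.1 ∧ q.2 = p.2 + 1) ∨ (q.1 = p.1 + 1 ∧ q.2 = p.2 + 1)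

/-- `T` is a traversal of two sequences of lengths `m` and `m'` (0-indexed):
it starts at `(0,0)`, ends at `(m-1, m'-1)`, and each step increments one or both indices. -/
def IsTraversal (m m' : ℕ) (T : List (ℕ × ℕ)) : Prop :=
  T ≠ [] ∧ T.head? = some (0, 0) ∧ T.getLast? = some (m - 1, m' - 1) ∧
    T.Chain' FrStep

/-- The discrete Fréchet distance between two finite point sequences:
the least `r` such that some traversal keeps all paired points within distance `r`. -/
noncomputable def dDF {α : Type*} [PseudoMetricSpace α] [Inhabited α]
    (P Q : List α) : ℝ :=
  sInf { r : ℝ | ∃ T : List (ℕ × ℕ), IsTraversal P.length Q.length T ∧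
    ∀ p ∈ T, dist (P.getD p.1 default) (Q.getD p.2 default) ≤ r }

/-- The two-letter alphabet `{A, B}`. -/
inductive AB : Type
  | A : AB
  | B : AB
deriving DecidableEq

/-- The sequence `⟨1, (−3, 1)^a⟩` with `a` occurrences of `−3`. -/
def Aseq (a : ℕ) : List ℝ := 1 :: (List.replicate a [(-3 : ℝ), 1]).flatten

/-- The sequence `⟨−1, (3, −1)^b⟩` with `b` occurrences of `3`. -/
def Bseq (b : ℕ) : List ℝ := -1 :: (List.replicate b [(3 : ℝ), -1]).flatten

/-- The middle-curve sequence representing a string `S` over `{A, B}`: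
each character maps to the pair `0, −2` (for `A`) or `0, 2` (for `B`),
and a final `0` is appended. -/
def MSeq (S : List AB) : List ℝ :=
  (S.map (fun c => [(0 : ℝ), match c with | AB.A => -2 | AB.B => 2])).flatten ++ [0]

/-!
A traversal is built letter by letter. Against the gadget of letter `c`, an occurrence of `c`
advances both sequences by two, pairing `0, ∓2` with `±1, ∓3`; any other letter advances only
the string sequence, pairing both of its points with the current gadget point `±1`. Every paired
distance is then at most `1`.
-/

lemma IsTraversal.cons_map_add {m n i j : ℕ} {T : List (ℕ × ℕ)} (hT : IsTraversal m n T)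
    (hm : m ≠ 0) (hn : n ≠ 0) (hij : FrStep (0, 0) (i, j)) :
    IsTraversal (m + i) (n + j) ((0, 0) :: T.map fun p => (p.1 + i, p.2 + j)) := by
  obtain ⟨-, hhead, hlast, hchain⟩ := hT
  refine ⟨List.cons_ne_nil _ _, rfl, ?_, ?_⟩
  · rw [List.getLast?_cons, List.getLast?_map, hlast]
    simp only [Option.map_some, Option.getD_some, Option.some.injEq, Prod.mk.injEq]
    omega
  · refine List.isChain_cons.2 ⟨?_, List.isChain_map_of_isChain _ ?_ hchain⟩
    · simpa [List.head?_map, hhead] using hij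
    · intro p q hpq
      unfold FrStep at hpq ⊢
      omega

section FrechetWithin

variable {α : Type*} [PseudoMetricSpace α] [Inhabited α]

def FrechetWithin (r : ℝ) (P Q : List α) : Prop :=
  ∃ T : List (ℕ × ℕ), IsTraversal P.length Q.length T ∧
    ∀ p ∈ T, dist (P.getD p.1 default) (Q.getD p.2 default) ≤ r

lemma dDF_le_of_frechetWithin {r : ℝ} {P Q : List α} (h : FrechetWithin r P Q) :
    dDF P Q ≤ r := by
  refine csInf_le ⟨0, ?_⟩ h
  rintro _ ⟨T, hT, hdist⟩
  exact dist_nonneg.trans (hdist (0, 0) (List.mem_of_mem_head? hT.2.1))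

lemma frechetWithin_singleton {r : ℝ} {x y : α} (hxy : dist x y ≤ r) :
    FrechetWithin r [x] [y] :=
  ⟨[(0, 0)], ⟨List.cons_ne_nil _ _, rfl, rfl, List.isChain_singleton _⟩, by simpa using hxy⟩

lemma FrechetWithin.cons_cons {r : ℝ} {x y : α} {P Q : List α} (h : FrechetWithin r P Q)
    (hP : P ≠ []) (hQ : Q ≠ []) (hxy : dist x y ≤ r) :
    FrechetWithin r (x :: P) (y :: Q) := by
  obtain ⟨T, hT, hdist⟩ := h
  refine ⟨_, hT.cons_map_add (by simpa using hP) (by simpa using hQ) (by simp [FrStep]), ?_⟩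
  simp only [List.mem_cons, List.mem_map]
  rintro p (rfl | ⟨q, hq, rfl⟩)
  · simpa using hxy
  · simpa using hdist q hq

lemma FrechetWithin.cons_left {r : ℝ} {x : α} {P Q : List α} (h : FrechetWithin r P Q)
    (hP : P ≠ []) (hQ : Q ≠ []) (hxy : dist x (Q.getD 0 default) ≤ r) :
    FrechetWithin r (x :: P) Q := by
  obtain ⟨T, hT, hdist⟩ := h
  refine ⟨_, hT.cons_map_add (j := 0) (by simpa using hP) (by simpa using hQ) (by simp [FrStep]),
    ?_⟩
  simp only [List.mem_cons, List.mem_map]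
  rintro p (rfl | ⟨q, hq, rfl⟩)
  · simpa using hxy
  · simpa using hdist q hq

end FrechetWithin

lemma frechetWithin_encoding_gadget {α σ : Type*} [PseudoMetricSpace α] [Inhabited α]
    [DecidableEq σ] {r : ℝ} (f : σ → α) (c : σ) {z u v : α} (hz : dist z u ≤ r)
    (hc : dist (f c) v ≤ r) (hother : ∀ d, d ≠ c → dist (f d) u ≤ r) (S : List σ) :
    FrechetWithin r ((S.map fun d => [z, f d]).flatten ++ [z])
      (u :: (List.replicate (S.count c) [v, u]).flatten) := by
  induction S with
  | nil => exact frechetWithin_singleton hz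
  | cons d S ih =>
    by_cases hd : d = c
    · subst hd
      simp only [List.map_cons, List.flatten_cons, List.count_cons_self, List.replicate_succ,
        List.cons_append, List.nil_append]
      exact (ih.cons_cons (by simp) (by simp) hc).cons_cons (by simp) (by simp) hz
    · simp only [List.map_cons, List.flatten_cons, List.count_cons_of_ne hd, List.cons_append,
        List.nil_append]
      exact (ih.cons_left (by simp) (by simp) (hother d hd)).cons_left (by simp) (by simp) hz

theorem MSeq_close_to_gadgets (S : List AB) (a b : ℕ)
    (ha : S.count AB.A = a) (hb : S.count AB.B = b) :
    dDF (MSeq S) (Aseq a) ≤ 1 ∧ dDF (MSeq S) (Bseq b) ≤ 1 := by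
  subst ha hb
  constructor
  · refine dDF_le_of_frechetWithin (frechetWithin_encoding_gadget _ AB.A ?_ ?_ ?_ S)
    · norm_num [Real.dist_eq]
    · norm_num [Real.dist_eq]
    · rintro (_ | _) hd <;> norm_num [Real.dist_eq] at *
  · refine dDF_le_of_frechetWithin (frechetWithin_encoding_gadget _ AB.B ?_ ?_ ?_ S)
    · norm_num [Real.dist_eq]
    · norm_num [Real.dist_eq]
    · rintro (_ | _) hd <;> norm_num [Real.dist_eq] at *
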